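/- (q-Worpitzky identity) For positive integers α, β, all n ≥ 0 and j ≥ 0: Σ_{k=0}^{j} qbinom(j-k+n+α+β-1, j-k) · E_{n,k}(α,β,q) = qbinom(j+α+β-1, j) · [j+β]^n, where E_{n,k} is defined by the recurrence E_{0,0}=1, E_{n,k} = q^(β+k-1)[n-k+α]E_{n-1,k-1} + [k+β]E_{n-1,k}, E_{n,k}=0 for k<0 or k>n. (Terms with k > n vanish.) -/

import Mathlib

/-! Induct on `n` with `j` fixed. Pushing the recurrence for `E α β (n + 1)` through the sum
turns the coefficient of `E α β n k` into a combination of two neighbouring q-binomials, which a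
q-Pascal step and the absorption identity collapse to `[j + β]` times the coefficient of the
`n`-th sum; so each step multiplies the sum by `[j + β]`. -/

open Finset

noncomputable section

abbrev K : Type := RatFunc ℚ

def qq : K := RatFunc.X

def qint (m : ℕ) : K := ∑ i ∈ Finset.range m, qq ^ i

def qfact (m : ℕ) : K := ∏ i ∈ Finset.range m, qint (i + 1)

def qbinom (a b : ℕ) : K := qfact a / (qfact b * qfact (a - b))

def E (α β : ℕ) : ℕ → ℕ → K
  | 0, k => if k = 0 then 1 else 0
  | n + 1, 0 => qint β * E α β n 0
  | n + 1, k + 1 =>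
      qq ^ (β + k) * qint (n - k + α) * E α β n k + qint (k + 1 + β) * E α β n (k + 1)

def poch (N : ℕ) : PowerSeries K :=
  ∏ i ∈ Finset.range N, (1 - PowerSeries.C (qq ^ i) * PowerSeries.X)

lemma qint_add (x y : ℕ) : qint (x + y) = qint x + qq ^ x * qint y := by
  simp [qint, sum_range_add, mul_sum, pow_add]

lemma qint_ne_zero {m : ℕ} (hm : m ≠ 0) : qint m ≠ 0 := by
  have hpoly : qint m = algebraMap (Polynomial ℚ) K (∑ i ∈ range m, Polynomial.X ^ i) := by
    simp [qint, qq, RatFunc.algebraMap_X]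
  rw [hpoly]
  refine RatFunc.algebraMap_ne_zero fun h => ?_
  have hcoeff := congrArg (Polynomial.coeff · 0) h
  simp [Polynomial.coeff_X_pow] at hcoeff
  omega

lemma qfact_succ (m : ℕ) : qfact (m + 1) = qfact m * qint (m + 1) :=
  prod_range_succ _ _

lemma qfact_ne_zero (m : ℕ) : qfact m ≠ 0 :=
  prod_ne_zero_iff.mpr fun _ _ => qint_ne_zero (Nat.succ_ne_zero _)

lemma qbinom_zero_right (m : ℕ) : qbinom m 0 = 1 := by
  simp [qbinom, show qfact 0 = 1 from prod_range_zero _, qfact_ne_zero]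

lemma qbinom_add_two_succ (b c : ℕ) :
    qbinom (b + c + 2) (b + 1) = qbinom (b + c + 1) (b + 1) + qq ^ (c + 1) * qbinom (b + c + 1) b := by
  unfold qbinom
  rw [show b + c + 2 - (b + 1) = c + 1 by omega, show b + c + 1 - (b + 1) = c by omega,
    show b + c + 1 - b = c + 1 by omega, show b + c + 2 = b + c + 1 + 1 by ring,
    qfact_succ (b + c + 1), show b + c + 1 + 1 = (c + 1) + (b + 1) by ring, qint_add,
    qfact_succ b, qfact_succ c]
  have := qfact_ne_zero b
  have := qfact_ne_zero c
  have := qint_ne_zero b.succ_ne_zero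
  have := qint_ne_zero c.succ_ne_zero
  field_simp

lemma qint_mul_qbinom_succ (b c : ℕ) :
    qint (b + 1) * qbinom (b + c + 1) (b + 1) = qint (c + 1) * qbinom (b + c + 1) b := by
  unfold qbinom
  rw [show b + c + 1 - (b + 1) = c by omega, show b + c + 1 - b = c + 1 by omega,
    qfact_succ b, qfact_succ c]
  have := qfact_ne_zero b
  have := qfact_ne_zero c
  have := qint_ne_zero b.succ_ne_zero
  have := qint_ne_zero c.succ_ne_zero
  field_simp

lemma qbinom_worpitzky_step (d x y : ℕ) (hxy : x + y ≠ 0) :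
    qbinom (d + x + y) d * (qq ^ x * qint y) + qint x * qbinom (d + x + y + 1) (d + 1) =
      qint (x + d + 1) * qbinom (d + x + y) (d + 1) := by
  obtain ⟨c, hc⟩ : ∃ c, x + y = c + 1 := Nat.exists_eq_succ_of_ne_zero hxy
  rw [show d + x + y + 1 = d + c + 2 by omega, show d + x + y = d + c + 1 by omega,
    qbinom_add_two_succ, add_assoc x d 1, qint_add x (d + 1)]
  have hqint : qint (c + 1) = qint y + qq ^ y * qint x := by rw [← hc, add_comm, qint_add]
  have hpow : (qq : K) ^ (c + 1) = qq ^ x * qq ^ y := by rw [← hc, pow_add]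
  linear_combination -qq ^ x * qint_mul_qbinom_succ d c - qq ^ x * qbinom (d + c + 1) d * hqint +
    qint x * qbinom (d + c + 1) d * hpow

lemma E_eq_zero_of_lt (α β : ℕ) {n k : ℕ} (h : n < k) : E α β n k = 0 := by
  induction n generalizing k with
  | zero => simp [E, Nat.ne_zero_of_lt h]
  | succ n ih =>
    obtain ⟨k, rfl⟩ : ∃ k', k = k' + 1 := Nat.exists_eq_succ_of_ne_zero (by omega)
    simp [E, ih (show n < k by omega), ih (show n < k + 1 by omega)]

lemma sum_mul_E_succ (α β n j : ℕ) (c : ℕ → K) :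
    ∑ k ∈ range (j + 1), c k * E α β (n + 1) k =
      ∑ k ∈ range j, (c (k + 1) * (qq ^ (β + k) * qint (n - k + α)) + c k * qint (k + β)) * E α β n k
        + c j * qint (j + β) * E α β n j := by
  have hstep (k : ℕ) : c (k + 1) * E α β (n + 1) (k + 1) =
      c (k + 1) * (qq ^ (β + k) * qint (n - k + α)) * E α β n k +
        c (k + 1) * qint (k + 1 + β) * E α β n (k + 1) := by
    rw [E]; ring
  calc ∑ k ∈ range (j + 1), c k * E α β (n + 1) k
      = ∑ k ∈ range j, c (k + 1) * (qq ^ (β + k) * qint (n - k + α)) * E α β n k +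
          ∑ k ∈ range (j + 1), c k * qint (k + β) * E α β n k := by
        rw [sum_range_succ', sum_congr rfl fun k _ => hstep k, sum_add_distrib,
          sum_range_succ' (fun k => c k * qint (k + β) * E α β n k), E, zero_add]
        ring
    _ = _ := by
        rw [sum_range_succ, ← add_assoc, ← sum_add_distrib]
        simp only [add_mul]

lemma worpitzky_coeff (α β : ℕ) (hα : 1 ≤ α) {n j k : ℕ} (hkj : k < j) (hkn : k ≤ n) :
    qbinom (j - (k + 1) + (n + 1) + α + β - 1) (j - (k + 1)) * (qq ^ (β + k) * qint (n - k + α)) +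
        qbinom (j - k + (n + 1) + α + β - 1) (j - k) * qint (k + β) =
      qint (j + β) * qbinom (j - k + n + α + β - 1) (j - k) := by
  obtain ⟨d, hd⟩ : ∃ d, j - k = d + 1 := ⟨j - k - 1, by omega⟩
  obtain ⟨e, rfl⟩ : ∃ e, n = k + e := ⟨n - k, by omega⟩
  rw [show j - (k + 1) + (k + e + 1) + α + β - 1 = d + (k + β) + (e + α) by omega,
    show j - k + (k + e + 1) + α + β - 1 = d + (k + β) + (e + α) + 1 by omega,
    show j - k + (k + e) + α + β - 1 = d + (k + β) + (e + α) by omega,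
    show j - (k + 1) = d by omega, hd, show k + e - k + α = e + α by omega,
    show j + β = k + β + d + 1 by omega, add_comm β k]
  linear_combination qbinom_worpitzky_step d (k + β) (e + α) (by omega)

theorem q_worpitzky_general (α β : ℕ) (hα : 1 ≤ α) (n j : ℕ) :
    ∑ k ∈ Finset.range (j + 1), qbinom (j - k + n + α + β - 1) (j - k) * E α β n k =
      qbinom (j + α + β - 1) j * qint (j + β) ^ n := by
  induction n with
  | zero =>
    rw [sum_range_succ', sum_eq_zero fun k _ => by simp [E]]
    simp [E]
  | succ n ih =>
    have hcoeff : ∀ k ∈ range j,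
        (qbinom (j - (k + 1) + (n + 1) + α + β - 1) (j - (k + 1)) *
            (qq ^ (β + k) * qint (n - k + α)) +
          qbinom (j - k + (n + 1) + α + β - 1) (j - k) * qint (k + β)) * E α β n k =
        qint (j + β) * (qbinom (j - k + n + α + β - 1) (j - k) * E α β n k) := by
      intro k hk
      rcases lt_or_ge n k with hnk | hkn
      · simp [E_eq_zero_of_lt α β hnk]
      · rw [worpitzky_coeff α β hα (mem_range.1 hk) hkn, mul_assoc]
    calc _ = qint (j + β) *
          ∑ k ∈ range (j + 1), qbinom (j - k + n + α + β - 1) (j - k) * E α β n k := by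
          rw [sum_mul_E_succ, sum_congr rfl hcoeff, ← mul_sum, sum_range_succ _ j]
          simp only [Nat.sub_self, qbinom_zero_right]
          ring
      _ = _ := by rw [ih, pow_succ]; ring

theorem q_worpitzky (α β : ℕ) (hα : 1 ≤ α) (hβ : 1 ≤ β) (n j : ℕ) :
    ∑ k ∈ Finset.range (j + 1), qbinom (j - k + n + α + β - 1) (j - k) * E α β n k =
      qbinom (j + α + β - 1) j * qint (j + β) ^ n :=
  q_worpitzky_general α β hα n j

end
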